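/- For all real λ ≠ 0, x, y and natural n, the two-variable Legendre polynomials satisfy P_n(λ x, y) = Σ_{r=0}^n (y^r/r!) (1-λ²)^r λ^(n-2r) ∂_x^r P_{n-r}(x,y). -/

import Mathlib

open Real Finset

noncomputable def legendre2 (n : ℕ) (x y : ℝ) : ℝ :=
  ((-1 : ℝ) ^ n / Real.sqrt Real.pi) *
    ∑ r ∈ Finset.range (n / 2 + 1),
      Real.Gamma ((n : ℝ) - r + 1 / 2) * x ^ (n - 2 * r) * (-y) ^ r /
        ((Nat.factorial (n - 2 * r) : ℝ) * (Nat.factorial r : ℝ))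

/-!
Both sides are polynomials in `x`; compare coefficients. Writing
`P_m(x, y) = ∑_j c_{m,j} (-y)^j x^(m-2j)`, the term `∂_x^r P_{n-r}` contributes to `x^(n-2s)`
through `c_{n-r,s-r}`, and `c_{n-r,s-r} (n-2s+r)^{(r)} = (-1)^r c_{n,s} s^{(r)}` (descending
factorials). Hence the coefficient of `(λx)^(n-2s)` on the right is `c_{n,s} (-y)^s` times
`∑_r C(s,r) (1-λ²)^r (λ²)^(s-r) = ((1-λ²) + λ²)^s = 1`.
-/

open Nat

theorem iteratedDeriv_sum_mul_pow {𝕜 ι : Type*} [NontriviallyNormedField 𝕜] (s : Finset ι)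
    (c : ι → 𝕜) (m : ι → ℕ) (r : ℕ) (x : 𝕜) :
    iteratedDeriv r (fun z => ∑ i ∈ s, c i * z ^ m i) x =
      ∑ i ∈ s, c i * (m i).descFactorial r * x ^ (m i - r) := by
  rw [iteratedDeriv_fun_sum fun i _ => by fun_prop]
  simp [mul_assoc]

theorem Finset.sum_range_sum_range_half_eq {M : Type*} [AddCommMonoid M] (n : ℕ)
    (F : ℕ → ℕ → M) (hF : ∀ r j, r + 2 * j ≤ n → n < 2 * (r + j) → F r j = 0) :
    ∑ r ∈ range (n + 1), ∑ j ∈ range ((n - r) / 2 + 1), F r j =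
      ∑ s ∈ range (n / 2 + 1), ∑ r ∈ range (s + 1), F r (s - r) := by
  rw [sum_sigma', sum_sigma']
  refine sum_bij_ne_zero (fun p _ _ => ⟨p.1 + p.2, p.1⟩) ?_ ?_ ?_ ?_
  · rintro ⟨r, j⟩ hp hne
    simp only [mem_sigma, mem_range] at hp ⊢
    by_contra h
    exact hne (hF r j (by omega) (by omega))
  · rintro ⟨r, j⟩ - - ⟨r', j'⟩ - - h
    simp only [Sigma.mk.injEq, heq_eq_eq] at h
    obtain ⟨h, rfl⟩ := h
    simp only [Sigma.mk.injEq, heq_eq_eq, true_and]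
    omega
  · rintro ⟨s, r⟩ hq hne
    simp only [mem_sigma, mem_range] at hq
    refine ⟨⟨r, s - r⟩, ?_, hne, ?_⟩
    · simp only [mem_sigma, mem_range]; omega
    · simp only [Sigma.mk.injEq, heq_eq_eq, and_true]
      omega
  · rintro ⟨r, j⟩ - -
    simp

theorem Nat.cast_descFactorial_add_eq_div {K : Type*} [Field K] [CharZero K] (a r : ℕ) :
    ((a + r).descFactorial r : K) = (a + r)! / a ! := by
  rw [eq_div_iff (Nat.cast_ne_zero.mpr a.factorial_ne_zero), ← Nat.cast_mul, mul_comm]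
  congr 1
  simpa using Nat.factorial_mul_descFactorial (Nat.le_add_left r a)

noncomputable def legendre2Coeff (m j : ℕ) : ℝ :=
  (-1) ^ m / √π * Gamma ((m : ℝ) - j + 1 / 2) / ((m - 2 * j)! * j ! : ℝ)

theorem legendre2_eq_sum (m : ℕ) (x y : ℝ) :
    legendre2 m x y =
      ∑ j ∈ range (m / 2 + 1), legendre2Coeff m j * (-y) ^ j * x ^ (m - 2 * j) := by
  rw [legendre2, mul_sum]
  refine sum_congr rfl fun j _ => ?_
  rw [legendre2Coeff]
  ring

theorem iteratedDeriv_legendre2 (m r : ℕ) (x y : ℝ) :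
    iteratedDeriv r (legendre2 m · y) x = ∑ j ∈ range (m / 2 + 1),
      legendre2Coeff m j * (-y) ^ j * (m - 2 * j).descFactorial r * x ^ (m - 2 * j - r) := by
  simp only [legendre2_eq_sum, iteratedDeriv_sum_mul_pow]

theorem legendre2Coeff_mul_descFactorial (k r j : ℕ) :
    legendre2Coeff (k + r + 2 * j) j * (k + r).descFactorial r =
      (-1) ^ r * legendre2Coeff (k + 2 * (r + j)) (r + j) * (r + j).descFactorial r := by
  have hΓ :
      ((k + r + 2 * j : ℕ) : ℝ) - j = ((k + 2 * (r + j) : ℕ) : ℝ) - (r + j : ℕ) := by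
    push_cast
    ring
  simp only [legendre2Coeff, Nat.cast_descFactorial_add_eq_div, add_comm r j, hΓ,
    Nat.add_sub_cancel, pow_add, pow_mul, neg_one_sq, one_pow]
  field_simp

theorem legendre2_scaling_term (lam x y : ℝ) (k r j : ℕ) :
    y ^ r / r ! * (1 - lam ^ 2) ^ r * lam ^ (k + 2 * j) *
        (legendre2Coeff (k + r + 2 * j) j * (-y) ^ j * (k + r).descFactorial r * x ^ k) =
      legendre2Coeff (k + 2 * (r + j)) (r + j) * (-y) ^ (r + j) * (lam * x) ^ k *
        ((1 - lam ^ 2) ^ r * (lam ^ 2) ^ j * (r + j).choose r) := by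
  have hchoose : ((r + j).choose r : ℝ) = (r + j).descFactorial r / r ! := by
    rw [Nat.descFactorial_eq_factorial_mul_choose]
    push_cast
    field_simp
  rw [hchoose, pow_add (-y), neg_pow y r]
  linear_combination (y ^ r / r ! * (1 - lam ^ 2) ^ r * lam ^ (k + 2 * j) * (-y) ^ j * x ^ k) *
    legendre2Coeff_mul_descFactorial k r j

theorem legendre2_scaling_general (lam x y : ℝ) (n : ℕ) :
    legendre2 n (lam * x) y =
      ∑ r ∈ Finset.range (n + 1),
        (y ^ r / (Nat.factorial r : ℝ)) * (1 - lam ^ 2) ^ r *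
          lam ^ ((n : ℤ) - 2 * r) *
          iteratedDeriv r (fun s : ℝ => legendre2 (n - r) s y) x := by
  set F : ℕ → ℕ → ℝ := fun r j =>
    y ^ r / r ! * (1 - lam ^ 2) ^ r * lam ^ ((n : ℤ) - 2 * r) *
      (legendre2Coeff (n - r) j * (-y) ^ j * (n - r - 2 * j).descFactorial r *
        x ^ (n - r - 2 * j - r))
  have hvanish : ∀ r j, r + 2 * j ≤ n → n < 2 * (r + j) → F r j = 0 := fun r j _ _ => by
    simp [F, Nat.descFactorial_of_lt (show n - r - 2 * j < r by omega)]
  have hdiagonal : ∀ s ∈ range (n / 2 + 1),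
      ∑ r ∈ range (s + 1), F r (s - r) =
        legendre2Coeff n s * (-y) ^ s * (lam * x) ^ (n - 2 * s) := by
    intro s hs
    obtain ⟨k, rfl⟩ : ∃ k, n = k + 2 * s := ⟨n - 2 * s, by grind⟩
    have hbinom :
        ∑ r ∈ range (s + 1), (1 - lam ^ 2) ^ r * (lam ^ 2) ^ (s - r) * s.choose r = 1 := by
      rw [← add_pow, sub_add_cancel, one_pow]
    rw [← mul_one (_ * _ * _), ← hbinom, mul_sum]
    refine sum_congr rfl fun r hr => ?_
    obtain ⟨j, rfl⟩ : ∃ j, s = r + j := ⟨s - r, by grind⟩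
    have hzpow : ((k + 2 * (r + j) : ℕ) : ℤ) - 2 * r = (k + 2 * j : ℕ) := by push_cast; ring
    simp only [F, hzpow, zpow_natCast, show k + 2 * (r + j) - r = k + r + 2 * j by omega,
      Nat.add_sub_cancel, Nat.add_sub_cancel_left]
    exact legendre2_scaling_term lam x y k r j
  have hexpand : ∀ r ∈ range (n + 1),
      y ^ r / r ! * (1 - lam ^ 2) ^ r * lam ^ ((n : ℤ) - 2 * r) *
        iteratedDeriv r (legendre2 (n - r) · y) x = ∑ j ∈ range ((n - r) / 2 + 1), F r j :=
    fun r _ => by rw [iteratedDeriv_legendre2, mul_sum]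
  rw [sum_congr rfl hexpand, sum_range_sum_range_half_eq n F hvanish, legendre2_eq_sum]
  exact (sum_congr rfl hdiagonal).symm

theorem legendre2_scaling (lam x y : ℝ) (hlam : lam ≠ 0) (n : ℕ) :
    legendre2 n (lam * x) y =
      ∑ r ∈ Finset.range (n + 1),
        (y ^ r / (Nat.factorial r : ℝ)) * (1 - lam ^ 2) ^ r *
          lam ^ ((n : ℤ) - 2 * r) *
          iteratedDeriv r (fun s : ℝ => legendre2 (n - r) s y) x :=
  legendre2_scaling_general lam x y n
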